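/- arXiv:quant-ph/0312006 — 5 statements merged into one kernel-verified Lean document; each statement's English description precedes it below -/
import Mathlib

section
/- Let E be a positive operator valued measure on the Borel sets of ℝ acting on a Hilbert space H with bounded first and second moment operators E[1] = ∫ x dE(x) and E[2] = ∫ x² dE(x). Then for any unit vector ψ, the variance of the probability measure X ↦ ⟨ψ, E(X)ψ⟩ equals ⟨ψ, (E[2] − E[1]²)ψ⟩ + (⟨ψ, E[1]²ψ⟩ − ⟨ψ, E[1]ψ⟩²), and both summands are nonnegative. -/
/-!
The identity is `∫ (x - m)² = ∫ x² - m²` rewritten with the moment operators; the content lies in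
the two inequalities. The second is Cauchy–Schwarz, `⟪ψ, M1 ψ⟫² ≤ ‖M1 ψ‖² = ⟪ψ, M1² ψ⟫`. The first
is the operator inequality `M1² ≤ M2`. Positivity of every `E(A)` on the vectors `φ + y ψ` says
that the real quadratic `⟪φ, E(A) φ⟫ + 2 y Re⟪φ, E(A) ψ⟫ + y² ⟪ψ, E(A) ψ⟫` is nonnegative for each
`A`. Summing it over the fibres of a simple function `s` (with `y` the value of `s`) and
approximating `x` by simple functions gives `(Re⟪φ, M1 ψ⟫)² ≤ ‖φ‖² ⟪ψ, M2 ψ⟫`; then take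
`φ = M1 ψ`.
-/

open MeasureTheory Filter Topology
open scoped InnerProductSpace

section CauchySchwarz

variable {Ω : Type*} [MeasurableSpace Ω]

lemma MeasureTheory.SimpleFunc.integral_comp_eq_sum {μ : Measure Ω} [IsFiniteMeasure μ]
    (s : SimpleFunc Ω ℝ) {g : ℝ → ℝ} (hg : g 0 = 0) :
    ∫ x, g (s x) ∂μ = ∑ y ∈ s.range, μ.real (s ⁻¹' {y}) * g y := by
  change ∫ x, s.map g x ∂μ = _
  rw [← SimpleFunc.integral_eq_integral _ (SimpleFunc.integrable_of_isFiniteMeasure _),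
    SimpleFunc.map_integral _ _ (SimpleFunc.integrable_of_isFiniteMeasure _) hg]
  rfl

variable {α β₁ β₂ γ : Measure Ω} [IsFiniteMeasure α] [IsFiniteMeasure β₁]
  [IsFiniteMeasure β₂] [IsFiniteMeasure γ]

lemma sq_integral_sub_le_of_simpleFunc
    (hq : ∀ A, MeasurableSet A → ∀ y : ℝ,
      0 ≤ α.real A + y * (β₁.real A - β₂.real A) + y ^ 2 * γ.real A)
    (s : SimpleFunc Ω ℝ) :
    (∫ x, s x ∂β₁ - ∫ x, s x ∂β₂) ^ 2 ≤ 4 * α.real Set.univ * ∫ x, s x ^ 2 ∂γ := by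
  have hα : α.real Set.univ = ∑ y ∈ s.range, α.real (s ⁻¹' {y}) := by
    rw [sum_measureReal_preimage_singleton _ fun y _ ↦ s.measurableSet_fiber y,
      SimpleFunc.coe_range, Set.preimage_range]
  have hβ₁ := s.integral_comp_eq_sum (μ := β₁) (g := id) rfl
  have hβ₂ := s.integral_comp_eq_sum (μ := β₂) (g := id) rfl
  have hγ := s.integral_comp_eq_sum (μ := γ) (g := (· ^ 2)) (zero_pow two_ne_zero)
  simp only [id] at hβ₁ hβ₂ hγ
  have hquad : ∀ t : ℝ, 0 ≤ (∫ x, s x ^ 2 ∂γ) * (t * t)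
      + (∫ x, s x ∂β₁ - ∫ x, s x ∂β₂) * t + α.real Set.univ := by
    intro t
    rw [hα, hβ₁, hβ₂, hγ, ← Finset.sum_sub_distrib, Finset.sum_mul, Finset.sum_mul,
      ← Finset.sum_add_distrib, ← Finset.sum_add_distrib]
    refine Finset.sum_nonneg fun y _ ↦ ?_
    linear_combination hq _ (s.measurableSet_fiber y) (t * y)
  have := discrim_le_zero hquad
  rw [discrim] at this
  linarith

theorem sq_integral_sub_le
    (hq : ∀ A, MeasurableSet A → ∀ y : ℝ,
      0 ≤ α.real A + y * (β₁.real A - β₂.real A) + y ^ 2 * γ.real A)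
    {f : Ω → ℝ} (hf : Measurable f) (hf₁ : Integrable f β₁) (hf₂ : Integrable f β₂)
    (hfγ : Integrable (fun x ↦ f x ^ 2) γ) :
    (∫ x, f x ∂β₁ - ∫ x, f x ∂β₂) ^ 2 ≤ 4 * α.real Set.univ * ∫ x, f x ^ 2 ∂γ := by
  let s : ℕ → SimpleFunc Ω ℝ := SimpleFunc.approxOn f hf Set.univ 0 (Set.mem_univ 0)
  have hs_tendsto : ∀ x, Tendsto (fun n ↦ s n x) atTop (𝓝 (f x)) := fun x ↦
    SimpleFunc.tendsto_approxOn hf (Set.mem_univ 0) (by simp)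
  have hs_le : ∀ n x, |s n x| ≤ 2 * |f x| := fun n x ↦ by
    simpa [two_mul] using SimpleFunc.norm_approxOn_zero_le hf (Set.mem_univ 0) x n
  have hlim : ∀ β : Measure Ω, Integrable f β →
      Tendsto (fun n ↦ ∫ x, s n x ∂β) atTop (𝓝 (∫ x, f x ∂β)) := fun β hfβ ↦
    tendsto_integral_of_dominated_convergence (fun x ↦ 2 * |f x|)
      (fun n ↦ (s n).aestronglyMeasurable) (hfβ.abs.const_mul 2)
      (fun n ↦ .of_forall (hs_le n)) (.of_forall hs_tendsto)
  have hlim_sq : Tendsto (fun n ↦ ∫ x, s n x ^ 2 ∂γ) atTop (𝓝 (∫ x, f x ^ 2 ∂γ)) :=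
    tendsto_integral_of_dominated_convergence (fun x ↦ 4 * f x ^ 2)
      (fun n ↦ ((s n).measurable.pow_const 2).aestronglyMeasurable) (hfγ.const_mul 4)
      (fun n ↦ .of_forall fun x ↦ by
        rw [Real.norm_eq_abs, abs_pow, ← sq_abs (f x)]
        nlinarith [hs_le n x, abs_nonneg (s n x)])
      (.of_forall fun x ↦ (hs_tendsto x).pow 2)
  exact le_of_tendsto_of_tendsto' (((hlim β₁ hf₁).sub (hlim β₂ hf₂)).pow 2)
    (hlim_sq.const_mul _) fun n ↦ sq_integral_sub_le_of_simpleFunc hq (s n)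

end CauchySchwarz

lemma integral_sub_integral_sq {Ω : Type*} [MeasurableSpace Ω] {μ : Measure Ω}
    [IsProbabilityMeasure μ] {Y : Ω → ℝ} (hY : MemLp Y 2 μ) :
    ∫ ω, (Y ω - ∫ ω', Y ω' ∂μ) ^ 2 ∂μ = ∫ ω, Y ω ^ 2 ∂μ - (∫ ω, Y ω ∂μ) ^ 2 := by
  rw [← ProbabilityTheory.variance_eq_integral hY.aemeasurable,
    ProbabilityTheory.variance_eq_sub hY]
  rfl

section QuadraticForm

variable {H : Type*} [NormedAddCommGroup H] [InnerProductSpace ℂ H]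

lemma re_inner_smul_apply_smul (T : H →L[ℂ] H) (c : ℂ) (v : H) :
    (⟪c • v, T (c • v)⟫_ℂ).re = ‖c‖ ^ 2 * (⟪v, T v⟫_ℂ).re := by
  rw [map_smul, inner_smul_left, inner_smul_right, ← mul_assoc, RCLike.conj_mul]
  exact_mod_cast Complex.re_ofReal_mul _ _

lemma re_inner_apply_eq_norm_sq_mul (T : H →L[ℂ] H) {v : H} (hv : v ≠ 0) :
    (⟪v, T v⟫_ℂ).re = ‖v‖ ^ 2 * (⟪(‖v‖⁻¹ : ℂ) • v, T ((‖v‖⁻¹ : ℂ) • v)⟫_ℂ).re := by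
  rw [re_inner_smul_apply_smul, ← mul_assoc, norm_inv, Complex.norm_real, norm_norm,
    ← mul_pow, mul_inv_cancel₀ (norm_ne_zero_iff.2 hv), one_pow, one_mul]

lemma re_inner_add_smul_apply (T : H →L[ℂ] H) (φ ψ : H) (y : ℝ) :
    (⟪φ + (y : ℂ) • ψ, T (φ + (y : ℂ) • ψ)⟫_ℂ).re = (⟪φ, T φ⟫_ℂ).re
      + y * ((⟪φ, T ψ⟫_ℂ).re + (⟪ψ, T φ⟫_ℂ).re) + y ^ 2 * (⟪ψ, T ψ⟫_ℂ).re := by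
  simp only [map_add, map_smul, inner_add_left, inner_add_right, inner_smul_left,
    inner_smul_right, Complex.conj_ofReal, Complex.add_re, Complex.re_ofReal_mul]
  ring

lemma re_inner_sq_apply [CompleteSpace H] {T : H →L[ℂ] H} (hT : IsSelfAdjoint T) (ψ : H) :
    (⟪ψ, (T ^ 2) ψ⟫_ℂ).re = ‖T ψ‖ ^ 2 := by
  change (⟪ψ, T (T ψ)⟫_ℂ).re = _
  rw [← hT.isSymmetric.apply_clm, inner_self_eq_norm_sq_to_K]
  norm_cast

lemma sq_re_inner_le_re_inner_sq [CompleteSpace H] {T : H →L[ℂ] H} (hT : IsSelfAdjoint T)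
    {ψ : H} (hψ : ‖ψ‖ = 1) :
    (⟪ψ, T ψ⟫_ℂ).re ^ 2 ≤ (⟪ψ, (T ^ 2) ψ⟫_ℂ).re := by
  rw [re_inner_sq_apply hT, ← sq_abs]
  have h := (Complex.abs_re_le_norm _).trans (norm_inner_le_norm ψ (T ψ))
  rw [hψ, one_mul] at h
  exact pow_le_pow_left₀ (abs_nonneg _) h 2

end QuadraticForm

section QuadraticMeasure

variable {H : Type*} [NormedAddCommGroup H] [InnerProductSpace ℂ H]
  {X : Type*} [MeasurableSpace X]

/-- A family `μ` that represents `u ↦ ⟪u, E(·) u⟫` on unit vectors, extended to all of `H` by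
homogeneity; the factor `‖v‖ ^ 2` kills the junk value `μ 0` at `v = 0`. -/
noncomputable def quadraticMeasure (μ : H → Measure X) (v : H) : Measure X :=
  ENNReal.ofReal (‖v‖ ^ 2) • μ ((‖v‖⁻¹ : ℂ) • v)

variable {μ : H → Measure X}

lemma isFiniteMeasure_quadraticMeasure (hμ : ∀ u : H, ‖u‖ = 1 → IsFiniteMeasure (μ u))
    (v : H) : IsFiniteMeasure (quadraticMeasure μ v) := by
  rcases eq_or_ne v 0 with rfl | hv
  · simpa [quadraticMeasure] using isFiniteMeasureZero
  · have := hμ ((‖v‖⁻¹ : ℂ) • v) (norm_smul_inv_norm hv)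
    exact Measure.smul_finite _ ENNReal.ofReal_ne_top

lemma quadraticMeasure_real_apply {T : H →L[ℂ] H} {A : Set X}
    (hT : ∀ u : H, ‖u‖ = 1 → (μ u).real A = (⟪u, T u⟫_ℂ).re) (v : H) :
    (quadraticMeasure μ v).real A = (⟪v, T v⟫_ℂ).re := by
  rcases eq_or_ne v 0 with rfl | hv
  · simp [quadraticMeasure]
  · rw [quadraticMeasure, measureReal_ennreal_smul_apply, ENNReal.toReal_ofReal (by positivity),
      hT ((‖v‖⁻¹ : ℂ) • v) (norm_smul_inv_norm hv), ← re_inner_apply_eq_norm_sq_mul T hv]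

lemma quadraticMeasure_real_univ (hμ : ∀ u : H, ‖u‖ = 1 → IsProbabilityMeasure (μ u))
    (v : H) : (quadraticMeasure μ v).real Set.univ = ‖v‖ ^ 2 := by
  have hone : ∀ u : H, ‖u‖ = 1 → (μ u).real Set.univ = (⟪u, (1 : H →L[ℂ] H) u⟫_ℂ).re :=
    fun u hu ↦ by
      have := hμ u hu
      simp [hu, inner_self_eq_norm_sq_to_K]
  simp only [quadraticMeasure_real_apply hone, one_apply_eq_self,
    inner_self_eq_norm_sq_to_K]
  norm_cast

lemma integral_quadraticMeasure {T : H →L[ℂ] H} {g : X → ℝ}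
    (hT : ∀ u : H, ‖u‖ = 1 → (⟪u, T u⟫_ℂ).re = ∫ x, g x ∂μ u) (v : H) :
    ∫ x, g x ∂quadraticMeasure μ v = (⟪v, T v⟫_ℂ).re := by
  rcases eq_or_ne v 0 with rfl | hv
  · simp [quadraticMeasure]
  · rw [quadraticMeasure, integral_smul_measure, ENNReal.toReal_ofReal (by positivity),
      ← hT ((‖v‖⁻¹ : ℂ) • v) (norm_smul_inv_norm hv), smul_eq_mul,
      ← re_inner_apply_eq_norm_sq_mul T hv]

lemma integrable_quadraticMeasure {g : X → ℝ} (hg : ∀ u : H, ‖u‖ = 1 → Integrable g (μ u))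
    (v : H) : Integrable g (quadraticMeasure μ v) := by
  rcases eq_or_ne v 0 with rfl | hv
  · simp [quadraticMeasure]
  · exact (hg _ (norm_smul_inv_norm hv)).smul_measure ENNReal.ofReal_ne_top

end QuadraticMeasure

section POVM

variable {H : Type*} [NormedAddCommGroup H] [InnerProductSpace ℂ H]
  {X : Type*} [MeasurableSpace X]

theorem sq_re_inner_add_re_inner_le {E : Set X → (H →L[ℂ] H)}
    (hEpos : ∀ A, MeasurableSet A → (E A).IsPositive) {μ : H → Measure X}
    (hμprob : ∀ u : H, ‖u‖ = 1 → IsProbabilityMeasure (μ u))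
    (hμE : ∀ u : H, ‖u‖ = 1 → ∀ A, MeasurableSet A → (μ u).real A = (⟪u, E A u⟫_ℂ).re)
    {f : X → ℝ} (hf : Measurable f) {M1 M2 : H →L[ℂ] H}
    (hint1 : ∀ u : H, ‖u‖ = 1 → Integrable f (μ u))
    (hint2 : ∀ u : H, ‖u‖ = 1 → Integrable (fun x ↦ f x ^ 2) (μ u))
    (hM1 : ∀ u : H, ‖u‖ = 1 → (⟪u, M1 u⟫_ℂ).re = ∫ x, f x ∂μ u)
    (hM2 : ∀ u : H, ‖u‖ = 1 → (⟪u, M2 u⟫_ℂ).re = ∫ x, f x ^ 2 ∂μ u) (φ ψ : H) :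
    ((⟪φ, M1 ψ⟫_ℂ).re + (⟪ψ, M1 φ⟫_ℂ).re) ^ 2 ≤ 4 * ‖φ‖ ^ 2 * (⟪ψ, M2 ψ⟫_ℂ).re := by
  have hfin : ∀ v, IsFiniteMeasure (quadraticMeasure μ v) :=
    isFiniteMeasure_quadraticMeasure fun u hu ↦ by have := hμprob u hu; infer_instance
  -- The measures at `φ ± ψ / 2` differ by `Re⟪φ, E(·) ψ⟫ + Re⟪ψ, E(·) φ⟫`.
  have hq : ∀ A, MeasurableSet A → ∀ y : ℝ,
      0 ≤ (quadraticMeasure μ φ).real A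
        + y * ((quadraticMeasure μ (φ + ((1 / 2 : ℝ) : ℂ) • ψ)).real A
          - (quadraticMeasure μ (φ + ((-1 / 2 : ℝ) : ℂ) • ψ)).real A)
        + y ^ 2 * (quadraticMeasure μ ψ).real A := by
    intro A hA y
    have h := (hEpos A hA).re_inner_nonneg_right (φ + (y : ℂ) • ψ)
    simp only [quadraticMeasure_real_apply fun u hu ↦ hμE u hu A hA, RCLike.re_to_complex,
      re_inner_add_smul_apply] at h ⊢
    linear_combination h
  have h := sq_integral_sub_le hq hf (integrable_quadraticMeasure hint1 _)
    (integrable_quadraticMeasure hint1 _) (integrable_quadraticMeasure hint2 _)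
  rw [integral_quadraticMeasure hM1, integral_quadraticMeasure hM1,
    integral_quadraticMeasure hM2, quadraticMeasure_real_univ hμprob,
    re_inner_add_smul_apply, re_inner_add_smul_apply] at h
  linear_combination h

theorem re_inner_sq_apply_le [CompleteSpace H] {E : Set X → (H →L[ℂ] H)}
    (hEpos : ∀ A, MeasurableSet A → (E A).IsPositive) {μ : H → Measure X}
    (hμprob : ∀ u : H, ‖u‖ = 1 → IsProbabilityMeasure (μ u))
    (hμE : ∀ u : H, ‖u‖ = 1 → ∀ A, MeasurableSet A → (μ u).real A = (⟪u, E A u⟫_ℂ).re)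
    {f : X → ℝ} (hf : Measurable f) {M1 M2 : H →L[ℂ] H} (hM1sa : IsSelfAdjoint M1)
    (hint1 : ∀ u : H, ‖u‖ = 1 → Integrable f (μ u))
    (hint2 : ∀ u : H, ‖u‖ = 1 → Integrable (fun x ↦ f x ^ 2) (μ u))
    (hM1 : ∀ u : H, ‖u‖ = 1 → (⟪u, M1 u⟫_ℂ).re = ∫ x, f x ∂μ u)
    (hM2 : ∀ u : H, ‖u‖ = 1 → (⟪u, M2 u⟫_ℂ).re = ∫ x, f x ^ 2 ∂μ u) (ψ : H) :
    (⟪ψ, (M1 ^ 2) ψ⟫_ℂ).re ≤ (⟪ψ, M2 ψ⟫_ℂ).re := by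
  have h := sq_re_inner_add_re_inner_le hEpos hμprob hμE hf hint1 hint2 hM1 hM2 (M1 ψ) ψ
  have hM1sq : (⟪ψ, M1 (M1 ψ)⟫_ℂ).re = ‖M1 ψ‖ ^ 2 := re_inner_sq_apply hM1sa ψ
  have hM2_nonneg : 0 ≤ (⟪ψ, M2 ψ⟫_ℂ).re :=
    integral_quadraticMeasure hM2 ψ ▸ integral_nonneg fun x ↦ sq_nonneg (f x)
  rw [← RCLike.re_to_complex, inner_self_eq_norm_sq, hM1sq] at h
  rw [re_inner_sq_apply hM1sa]
  nlinarith [sq_nonneg (‖M1 ψ‖ ^ 2 - (⟪ψ, M2 ψ⟫_ℂ).re)]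

end POVM

theorem variance_decomposition_of_povm_general
    {H : Type*} [NormedAddCommGroup H] [InnerProductSpace ℂ H] [CompleteSpace H]
    (E : Set ℝ → (H →L[ℂ] H))
    (hEpos : ∀ X : Set ℝ, MeasurableSet X → (E X).IsPositive)
    (μ : H → Measure ℝ)
    (hμprob : ∀ ψ : H, ‖ψ‖ = 1 → IsProbabilityMeasure (μ ψ))
    (hμE : ∀ ψ : H, ‖ψ‖ = 1 → ∀ X : Set ℝ, MeasurableSet X →
      ((μ ψ) X).toReal = (⟪ψ, E X ψ⟫_ℂ).re)
    (M1 M2 : H →L[ℂ] H)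
    (hM1sa : IsSelfAdjoint M1)
    (hint1 : ∀ ψ : H, ‖ψ‖ = 1 → Integrable (fun x : ℝ => x) (μ ψ))
    (hint2 : ∀ ψ : H, ‖ψ‖ = 1 → Integrable (fun x : ℝ => x ^ 2) (μ ψ))
    (hM1 : ∀ ψ : H, ‖ψ‖ = 1 → (⟪ψ, M1 ψ⟫_ℂ).re = ∫ x, x ∂(μ ψ))
    (hM2 : ∀ ψ : H, ‖ψ‖ = 1 → (⟪ψ, M2 ψ⟫_ℂ).re = ∫ x, x ^ 2 ∂(μ ψ))
    (ψ : H) (hψ : ‖ψ‖ = 1) :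
    (∫ x, (x - ∫ y, y ∂(μ ψ)) ^ 2 ∂(μ ψ))
      = (⟪ψ, (M2 - M1 ^ 2) ψ⟫_ℂ).re
        + ((⟪ψ, (M1 ^ 2) ψ⟫_ℂ).re - (⟪ψ, M1 ψ⟫_ℂ).re ^ 2)
    ∧ 0 ≤ (⟪ψ, (M2 - M1 ^ 2) ψ⟫_ℂ).re
    ∧ 0 ≤ (⟪ψ, (M1 ^ 2) ψ⟫_ℂ).re - (⟪ψ, M1 ψ⟫_ℂ).re ^ 2 := by
  have := hμprob ψ hψ
  have hvar := integral_sub_integral_sq (Y := fun x : ℝ ↦ x)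
    ((memLp_two_iff_integrable_sq measurable_id'.aestronglyMeasurable).2 (hint2 ψ hψ))
  have hsub : (⟪ψ, (M2 - M1 ^ 2) ψ⟫_ℂ).re = (⟪ψ, M2 ψ⟫_ℂ).re - (⟪ψ, (M1 ^ 2) ψ⟫_ℂ).re := by
    rw [sub_apply, inner_sub_right, Complex.sub_re]
  refine ⟨?_, ?_, ?_⟩
  · rw [hvar, hsub, hM1 ψ hψ, hM2 ψ hψ]
    ring
  · rw [hsub, sub_nonneg]
    exact re_inner_sq_apply_le hEpos hμprob hμE measurable_id hM1sa hint1 hint2 hM1 hM2 ψ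
  · exact sub_nonneg.2 (sq_re_inner_le_re_inner_sq hM1sa hψ)

/-- For a normalized POVM `E` on the Borel sets of ℝ with bounded selfadjoint
first and second moment operators `M1 = E[1]`, `M2 = E[2]`, and any unit vector `ψ`, the
variance of the probability measure `X ↦ ⟨ψ, E(X)ψ⟩` equals
`⟨ψ,(E[2]−E[1]²)ψ⟩ + (⟨ψ,E[1]²ψ⟩ − ⟨ψ,E[1]ψ⟩²)`, and both summands are nonnegative. -/
theorem variance_decomposition_of_povm
    {H : Type*} [NormedAddCommGroup H] [InnerProductSpace ℂ H] [CompleteSpace H]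
    (E : Set ℝ → (H →L[ℂ] H))
    (hEpos : ∀ X : Set ℝ, MeasurableSet X → (E X).IsPositive)
    (hEnorm : E Set.univ = 1)
    (μ : H → Measure ℝ)
    (hμprob : ∀ ψ : H, ‖ψ‖ = 1 → IsProbabilityMeasure (μ ψ))
    (hμE : ∀ ψ : H, ‖ψ‖ = 1 → ∀ X : Set ℝ, MeasurableSet X →
      ((μ ψ) X).toReal = (⟪ψ, E X ψ⟫_ℂ).re)
    (M1 M2 : H →L[ℂ] H)
    (hM1sa : IsSelfAdjoint M1) (hM2sa : IsSelfAdjoint M2)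
    (hint1 : ∀ ψ : H, ‖ψ‖ = 1 → Integrable (fun x : ℝ => x) (μ ψ))
    (hint2 : ∀ ψ : H, ‖ψ‖ = 1 → Integrable (fun x : ℝ => x ^ 2) (μ ψ))
    (hM1 : ∀ ψ : H, ‖ψ‖ = 1 → (⟪ψ, M1 ψ⟫_ℂ).re = ∫ x, x ∂(μ ψ))
    (hM2 : ∀ ψ : H, ‖ψ‖ = 1 → (⟪ψ, M2 ψ⟫_ℂ).re = ∫ x, x ^ 2 ∂(μ ψ))
    (ψ : H) (hψ : ‖ψ‖ = 1) :
    (∫ x, (x - ∫ y, y ∂(μ ψ)) ^ 2 ∂(μ ψ))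
      = (⟪ψ, (M2 - M1 ^ 2) ψ⟫_ℂ).re
        + ((⟪ψ, (M1 ^ 2) ψ⟫_ℂ).re - (⟪ψ, M1 ψ⟫_ℂ).re ^ 2)
    ∧ 0 ≤ (⟪ψ, (M2 - M1 ^ 2) ψ⟫_ℂ).re
    ∧ 0 ≤ (⟪ψ, (M1 ^ 2) ψ⟫_ℂ).re - (⟪ψ, M1 ψ⟫_ℂ).re ^ 2 :=
  variance_decomposition_of_povm_general E hEpos μ hμprob hμE M1 M2 hM1sa hint1 hint2 hM1 hM2 ψ hψ
end

section
/- For projection operators P and R on a Hilbert space, PRP is a projection if and only if PR = RP. -/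
/-- For orthogonal projections `P` and `R` on a complex Hilbert space,
`PRP` is a projection if and only if `PR = RP`. -/
theorem prp_projection_iff_commute
    {H : Type*} [NormedAddCommGroup H] [InnerProductSpace ℂ H] [CompleteSpace H]
    (P R : H →L[ℂ] H)
    (hPsa : IsSelfAdjoint P) (hPidem : IsIdempotentElem P)
    (hRsa : IsSelfAdjoint R) (hRidem : IsIdempotentElem R) :
    IsIdempotentElem (P * R * P) ↔ P * R = R * P := by
  have hP : P * P = P := hPidem
  have hR : R * R = R := hRidem
  have hP1 : ∀ x : H →L[ℂ] H, P * (P * x) = P * x := fun x => by rw [← mul_assoc, hP]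
  have hR1 : ∀ x : H →L[ℂ] H, R * (R * x) = R * x := fun x => by rw [← mul_assoc, hR]
  constructor
  · intro h
    have h' : (P * R * P) * (P * R * P) = P * R * P := h
    have h5 : P * (R * (P * (R * P))) = P * (R * P) := by
      have e : (P * R * P) * (P * R * P) = P * (R * (P * (P * (R * P)))) := by
        noncomm_ring
      rw [hP1] at e
      rw [← e, h']
      noncomm_ring
    set X := R * P - P * R * P with hX
    have hs : star X = P * R - P * R * P := by
      simp [hX, star_sub, star_mul, hPsa.star_eq, hRsa.star_eq, mul_assoc]
    have hXX : star X * X = 0 := by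
      rw [hs, hX]
      have e : (P * R - P * R * P) * (R * P - P * R * P)
          = P * (R * (R * P)) - P * (R * (P * (R * P)))
            - P * (R * (P * (R * P))) + P * (R * (P * (P * (R * P)))) := by
        noncomm_ring
      rw [e, hP1, hR1, h5]
      abel
    have hX0 : X = 0 := by
      rwa [CStarRing.star_mul_self_eq_zero_iff] at hXX
    have hRP : R * P = P * R * P := by
      have := sub_eq_zero.mp hX0
      exact this
    have hPR : P * R = P * R * P := by
      have := congrArg star hRP
      simpa [star_mul, hPsa.star_eq, hRsa.star_eq, mul_assoc] using this
    rw [hPR, hRP]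
  · intro hc
    have key : P * R * P = R * P := by
      rw [hc, mul_assoc, hP]
    show (P * R * P) * (P * R * P) = P * R * P
    rw [key]
    calc (R * P) * (R * P) = R * (P * R) * P := by noncomm_ring
      _ = R * (R * P) * P := by rw [hc]
      _ = R * P := by rw [← mul_assoc, hR, mul_assoc, hP]
end

section
/- Let Φ(B) = Σᵢ Dᵢ* B Dᵢ be a unital completely positive map in Kraus form and B a bounded selfadjoint operator. Then Φ(B) = B and Φ(B²) = B² hold simultaneously if and only if B Dᵢ = Dᵢ B for all i. -/
open ContinuousLinearMap

/-!
If `B` commutes with every `Dᵢ`, then `Φ(A) = Σᵢ Dᵢ* A Dᵢ = Σᵢ Dᵢ* Dᵢ A = A` for `A = B` and `A = B²`.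
Conversely, expanding the squares gives the defect identity
`Σᵢ ‖B Dᵢ x - Dᵢ B x‖² = Re⟪x, Φ(B*B) x⟫ - 2 Re⟪x, Φ(B*) B x⟫ + ‖B x‖²`,
whose right-hand side vanishes when `B = B*` is fixed together with `B²`;
a convergent sum of nonnegative terms with sum `0` has all terms `0`.
-/

open scoped InnerProductSpace

section Kraus

variable {𝕜 : Type*} [RCLike 𝕜] {H : Type*} [NormedAddCommGroup H] [InnerProductSpace 𝕜 H]
  [CompleteSpace H] {ι : Type*} {D : ι → H →L[𝕜] H}

theorem HasSum.inner_apply_of_adjoint {f : ι → H} {y : H}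
    (h : HasSum (fun i => adjoint (D i) (f i)) y) (u : H) :
    HasSum (fun i => ⟪D i u, f i⟫_𝕜) ⟪u, y⟫_𝕜 := by
  simpa only [innerSL_apply_apply, adjoint_inner_right] using h.mapL (innerSL 𝕜 u)

variable (hunital : ∀ x : H, HasSum (fun i => adjoint (D i) (D i x)) x)
  {Φ : (H →L[𝕜] H) → (H →L[𝕜] H)}
  (hΦ : ∀ (A : H →L[𝕜] H) (x : H), HasSum (fun i => adjoint (D i) (A (D i x))) (Φ A x))
include hunital hΦ

theorem kraus_eq_self_of_commute {A : H →L[𝕜] H} (hA : ∀ i, Commute A (D i)) : Φ A = A := by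
  ext x
  refine (hΦ A x).unique ?_
  convert hunital (A x) using 3 with i
  exact DFunLike.congr_fun (hA i) x

theorem hasSum_norm_sq_sub_commutator (B : H →L[𝕜] H) (x : H) :
    HasSum (fun i => ‖B (D i x) - D i (B x)‖ ^ 2)
      (RCLike.re ⟪x, Φ (adjoint B * B) x⟫_𝕜 - 2 * RCLike.re ⟪x, Φ (adjoint B) (B x)⟫_𝕜
        + ‖B x‖ ^ 2) := by
  have hBB := RCLike.hasSum_re _ ((hΦ (adjoint B * B) x).inner_apply_of_adjoint x)
  have hBD := RCLike.hasSum_re _ ((hΦ (adjoint B) (B x)).inner_apply_of_adjoint x)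
  have hDD := RCLike.hasSum_re _ ((hunital (B x)).inner_apply_of_adjoint (B x))
  simp only [mul_apply_eq_comp, adjoint_inner_right, inner_self_eq_norm_sq] at hBB hBD hDD
  simpa only [norm_sub_sq (𝕜 := 𝕜)] using (hBB.sub (hBD.mul_left 2)).add hDD

theorem commute_of_kraus_eq_self_of_sq_eq_self {B : H →L[𝕜] H} (hB : IsSelfAdjoint B)
    (h₁ : Φ B = B) (h₂ : Φ (B ^ 2) = B ^ 2) (i : ι) : Commute B (D i) := by
  ext x
  have hsum := hasSum_norm_sq_sub_commutator hunital hΦ B x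
  have hBB : RCLike.re ⟪x, B (B x)⟫_𝕜 = ‖B x‖ ^ 2 := by
    rw [← adjoint_inner_left, hB.adjoint_eq]
    exact inner_self_eq_norm_sq (B x)
  rw [hB.adjoint_eq, ← pow_two, h₁, h₂, pow_two, mul_apply_eq_comp, hBB,
    show ‖B x‖ ^ 2 - 2 * ‖B x‖ ^ 2 + ‖B x‖ ^ 2 = 0 by ring,
    hasSum_zero_iff_of_nonneg fun _ => sq_nonneg _] at hsum
  simpa [sub_eq_zero] using congrFun hsum i

end Kraus

theorem kraus_fixed_point_iff_commutes_general
    {H : Type*} [NormedAddCommGroup H] [InnerProductSpace ℂ H] [CompleteSpace H]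
    {ι : Type*}
    (D : ι → (H →L[ℂ] H))
    (hunital : ∀ x : H, HasSum (fun i => (adjoint (D i)) ((D i) x)) x)
    (Φ : (H →L[ℂ] H) → (H →L[ℂ] H))
    (hΦ : ∀ (B : H →L[ℂ] H) (x : H),
      HasSum (fun i => (adjoint (D i)) (B ((D i) x))) ((Φ B) x))
    (B : H →L[ℂ] H) (hBsa : IsSelfAdjoint B) :
    (Φ B = B ∧ Φ (B ^ 2) = B ^ 2) ↔ ∀ i, B * D i = D i * B := by
  refine ⟨fun ⟨h₁, h₂⟩ => commute_of_kraus_eq_self_of_sq_eq_self hunital hΦ hBsa h₁ h₂,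
    fun hcomm => ⟨kraus_eq_self_of_commute hunital hΦ hcomm, ?_⟩⟩
  exact kraus_eq_self_of_commute hunital hΦ fun i => Commute.pow_left (hcomm i) 2

/-- Let `Φ(B) = Σᵢ Dᵢ* B Dᵢ` be a unital completely positive map in Kraus
form (`Σᵢ Dᵢ* Dᵢ = I`, sums converging strongly) and `B` a bounded selfadjoint operator.
Then `Φ(B) = B` and `Φ(B²) = B²` hold simultaneously if and only if `B Dᵢ = Dᵢ B` for
all `i`. -/
theorem kraus_fixed_point_iff_commutes
    {H : Type*} [NormedAddCommGroup H] [InnerProductSpace ℂ H] [CompleteSpace H]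
    {ι : Type*} [Countable ι]
    (D : ι → (H →L[ℂ] H))
    (hunital : ∀ x : H, HasSum (fun i => (adjoint (D i)) ((D i) x)) x)
    (Φ : (H →L[ℂ] H) → (H →L[ℂ] H))
    (hΦ : ∀ (B : H →L[ℂ] H) (x : H),
      HasSum (fun i => (adjoint (D i)) (B ((D i) x))) ((Φ B) x))
    (B : H →L[ℂ] H) (hBsa : IsSelfAdjoint B) :
    (Φ B = B ∧ Φ (B ^ 2) = B ^ 2) ↔ ∀ i, B * D i = D i * B :=
  kraus_fixed_point_iff_commutes_general D hunital Φ hΦ B hBsa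
end

section
/- Let f be a probability density on ℝ with finite mean 0 and finite variance Var(f), and let Q be the position operator on L²(ℝ). Define the smeared position observable Q_f by Q_f(X) := (χ_X ∗ f)(Q), where χ_X ∗ f is the convolution of the indicator of the Borel set X with f. Then Q_f is a normalized POVM, and for every unit vector ψ in the domain of Q for which the second moments exist, Var((Q_f)_ψ) − Var((E^Q)_ψ) = Var(f); in particular the noise ε_n(Q_f, Q, ψ)² = Var(f) is independent of ψ. -/
open MeasureTheory
open scoped ENNReal NNReal

private lemma var_helper (μ : Measure ℝ) [IsProbabilityMeasure μ]
    (h1 : Integrable (fun x : ℝ => x) μ) (h2 : Integrable (fun x : ℝ => x ^ 2) μ) :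
    ∫ x, (x - ∫ y, y ∂μ) ^ 2 ∂μ = (∫ x, x ^ 2 ∂μ) - (∫ y, y ∂μ) ^ 2 := by
  set m : ℝ := ∫ y, y ∂μ with hm
  have hexp : ∀ x : ℝ, (x - m) ^ 2 = x ^ 2 - (2 * m) * x + m ^ 2 := by intro x; ring
  simp_rw [hexp]
  have h2' : Integrable (fun x : ℝ => x ^ 2 - 2 * m * x) μ := h2.sub (h1.const_mul (2 * m))
  calc ∫ x, (x ^ 2 - 2 * m * x + m ^ 2) ∂μ
      = (∫ x, (x ^ 2 - 2 * m * x) ∂μ) + ∫ _x, (m ^ 2 : ℝ) ∂μ :=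
        integral_add h2' (integrable_const _)
    _ = ((∫ x, x ^ 2 ∂μ) - ∫ x, 2 * m * x ∂μ) + m ^ 2 := by
        rw [integral_sub h2 (h1.const_mul (2 * m)), integral_const]; simp
    _ = (∫ x, x ^ 2 ∂μ) - m ^ 2 := by rw [integral_const_mul, ← hm]; ring

/-- Let `f` be a probability density on ℝ with mean `0` and finite variance,
and `Q` the position operator on `L²(ℝ)`. For a unit vector `ψ`, the position
distribution is `μψ = |ψ(x)|² dx`, and the distribution of the smeared position
observable `Q_f(X) = (χ_X ∗ f)(Q)` in the state `ψ` is the measure `κ` with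
`κ(X) = ∫ (χ_X ∗ f)(x) |ψ(x)|² dx`. Then `κ` is a probability measure (so `Q_f` is a
normalized POVM at the level of statistics), and whenever the second moments exist,
`Var(κ) − Var(μψ) = Var(f)`; in particular the noise
`ε_n(Q_f,Q,ψ)² = ∫x² dκ − ∫x² dμψ = Var(f)` is independent of `ψ`. -/
theorem smeared_position_noise
    (f : ℝ → ℝ) (hfmeas : Measurable f) (hfpos : ∀ t, 0 ≤ f t)
    (hfint : Integrable f volume) (hfnorm : ∫ t, f t = 1)
    (hfmean : Integrable (fun t => t * f t) volume) (hfmean0 : ∫ t, t * f t = 0)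
    (hfvar : Integrable (fun t => t ^ 2 * f t) volume)
    (ψ : ℝ → ℂ) (hψmeas : Measurable ψ) (hψnorm : ∫ x, ‖ψ x‖ ^ 2 = 1) :
    let μψ : Measure ℝ := volume.withDensity (fun x => ENNReal.ofReal (‖ψ x‖ ^ 2))
    ∀ κ : Measure ℝ,
      (∀ X : Set ℝ, MeasurableSet X →
        (κ X).toReal = ∫ x, (∫ t, X.indicator (fun _ => (1 : ℝ)) (x - t) * f t) ∂μψ) →
      Integrable (fun x : ℝ => x) μψ → Integrable (fun x : ℝ => x ^ 2) μψ →
      Integrable (fun x : ℝ => x) κ → Integrable (fun x : ℝ => x ^ 2) κ →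
      IsProbabilityMeasure κ
      ∧ (∫ x, (x - ∫ y, y ∂κ) ^ 2 ∂κ) - (∫ x, (x - ∫ y, y ∂μψ) ^ 2 ∂μψ)
          = ∫ t, t ^ 2 * f t
      ∧ (∫ x, x ^ 2 ∂κ) - (∫ x, x ^ 2 ∂μψ) = ∫ t, t ^ 2 * f t := by
  intro μψ κ hκ hμ1 hμ2 hκ1 hκ2
  set μf : Measure ℝ := volume.withDensity (fun t => ENNReal.ofReal (f t)) with hμf
  -- ‖ψ‖² is integrable
  have hψ2meas : Measurable fun x => ‖ψ x‖ ^ 2 := hψmeas.norm.pow_const 2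
  have hψint : Integrable (fun x => ‖ψ x‖ ^ 2) volume := by
    by_contra h
    rw [integral_undef h] at hψnorm; norm_num at hψnorm
  -- μψ and μf are probability measures
  haveI : IsProbabilityMeasure μψ := by
    constructor
    rw [withDensity_apply _ MeasurableSet.univ, setLIntegral_univ,
      ← ofReal_integral_eq_lintegral_ofReal hψint
        (Filter.Eventually.of_forall fun x => by positivity), hψnorm]
    simp
  haveI : IsProbabilityMeasure μf := by
    constructor
    rw [hμf, withDensity_apply _ MeasurableSet.univ, setLIntegral_univ,
      ← ofReal_integral_eq_lintegral_ofReal hfint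
        (Filter.Eventually.of_forall hfpos), hfnorm]
    simp
  -- integrability and moments of μf
  have hofR : ∀ t, (ENNReal.ofReal (f t)).toReal = f t := fun t =>
    ENNReal.toReal_ofReal (hfpos t)
  have hflt : ∀ᵐ t ∂(volume : Measure ℝ), ENNReal.ofReal (f t) < ⊤ :=
    Filter.Eventually.of_forall fun t => ENNReal.ofReal_lt_top
  have hfmeas' : Measurable fun t => ENNReal.ofReal (f t) := hfmeas.ennreal_ofReal
  have hmf1 : Integrable (fun t : ℝ => t) μf := by
    rw [hμf, integrable_withDensity_iff hfmeas' hflt]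
    simpa [hofR] using hfmean
  have hmf2 : Integrable (fun t : ℝ => t ^ 2) μf := by
    rw [hμf, integrable_withDensity_iff hfmeas' hflt]
    simpa [hofR] using hfvar
  have hnnmeas : Measurable fun t => (f t).toNNReal := hfmeas.real_toNNReal
  have hμf' : μf = volume.withDensity fun t => ((f t).toNNReal : ℝ≥0∞) := rfl
  have hint_t : ∫ t : ℝ, t ∂μf = 0 := by
    rw [hμf', integral_withDensity_eq_integral_smul hnnmeas]
    rw [← hfmean0]
    congr 1; funext t
    simp [NNReal.smul_def, Real.coe_toNNReal _ (hfpos t), mul_comm]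
  have hint_t2 : ∫ t : ℝ, t ^ 2 ∂μf = ∫ t, t ^ 2 * f t := by
    rw [hμf', integral_withDensity_eq_integral_smul hnnmeas]
    congr 1; funext t
    simp [NNReal.smul_def, Real.coe_toNNReal _ (hfpos t), mul_comm]
  -- the convolution measure
  set κ' : Measure ℝ := (μψ.prod μf).map (fun p : ℝ × ℝ => p.1 - p.2) with hκ'
  have hsubmeas : Measurable fun p : ℝ × ℝ => p.1 - p.2 :=
    measurable_fst.sub measurable_snd
  haveI : IsProbabilityMeasure κ' := Measure.isProbabilityMeasure_map hsubmeas.aemeasurable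
  -- κ univ is finite
  have hκuniv : (κ Set.univ).toReal = 1 := by
    have := hκ Set.univ MeasurableSet.univ
    simpa [hfnorm] using this
  have hκfin : ∀ X : Set ℝ, κ X ≠ ⊤ := by
    intro X
    intro htop
    have hle : κ X ≤ κ Set.univ := measure_mono (Set.subset_univ X)
    rw [htop, top_le_iff] at hle
    rw [hle] at hκuniv
    simp at hκuniv
  -- κ = κ'
  have hκeq : κ = κ' := by
    ext X hX
    have h1 := hκ X hX
    have hXpre : ∀ x : ℝ, MeasurableSet ((fun t => x - t) ⁻¹' X) := fun x =>
      (measurable_const.sub measurable_id) hX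
    -- κ' X as a lintegral
    have hκ'X : κ' X = ∫⁻ x, μf ((fun t => x - t) ⁻¹' X) ∂μψ := by
      rw [hκ', Measure.map_apply hsubmeas hX, Measure.prod_apply (hsubmeas hX)]
      rfl
    -- inner integral
    set F : ℝ → ℝ≥0∞ := fun x => μf ((fun t => x - t) ⁻¹' X) with hF
    have hFmeas : Measurable F := by
      have : ∀ x, (fun t => x - t) ⁻¹' X = Prod.mk x ⁻¹' ((fun p : ℝ × ℝ => p.1 - p.2) ⁻¹' X) :=
        fun x => rfl
      simp_rw [hF, this]
      exact measurable_measure_prodMk_left (hsubmeas hX)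
    have hFle : ∀ x, F x ≤ 1 := fun x => by
      calc F x ≤ μf Set.univ := measure_mono (Set.subset_univ _)
      _ = 1 := measure_univ
    have hFlt : ∀ x, F x < ⊤ := fun x => lt_of_le_of_lt (hFle x) ENNReal.one_lt_top
    have hinner : ∀ x : ℝ, (∫ t, X.indicator (fun _ => (1 : ℝ)) (x - t) * f t) = (F x).toReal := by
      intro x
      have hmeasg : Measurable fun t => X.indicator (fun _ => (1 : ℝ)) (x - t) * f t :=
        ((measurable_one.indicator hX).comp (measurable_const.sub measurable_id)).mul hfmeas
      rw [integral_eq_lintegral_of_nonneg_ae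
        (Filter.Eventually.of_forall fun t => mul_nonneg (Set.indicator_nonneg (fun _ _ => zero_le_one) _) (hfpos t))
        hmeasg.aestronglyMeasurable]
      congr 1
      simp only [hF, hμf]
      rw [withDensity_apply _ (hXpre x), ← lintegral_indicator (hXpre x) _]
      congr 1; funext t
      by_cases ht : x - t ∈ X
      · simp [Set.indicator_of_mem, ht, Set.indicator_of_mem (show t ∈ (fun t => x - t) ⁻¹' X from ht)]
      · simp [Set.indicator_of_notMem, ht, Set.indicator_of_notMem (show t ∉ (fun t => x - t) ⁻¹' X from ht)]
    have hgint : Integrable (fun x => (F x).toReal) μψ := by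
      refine ⟨(hFmeas.ennreal_toReal).aestronglyMeasurable, ?_⟩
      apply HasFiniteIntegral.of_bounded (C := 1)
      exact Filter.Eventually.of_forall fun x => by
        rw [Real.norm_of_nonneg ENNReal.toReal_nonneg]
        exact ENNReal.toReal_le_of_le_ofReal zero_le_one (by simpa using hFle x)
    have : ENNReal.ofReal ((κ X).toReal) = κ' X := by
      rw [h1, hκ'X]
      simp_rw [hinner]
      rw [ofReal_integral_eq_lintegral_ofReal hgint
        (Filter.Eventually.of_forall fun x => ENNReal.toReal_nonneg)]
      congr 1; funext x
      exact ENNReal.ofReal_toReal (hFlt x).ne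
    rw [← this, ENNReal.ofReal_toReal (hκfin X)]
  haveI hκprob : IsProbabilityMeasure κ := by rw [hκeq]; infer_instance
  -- moments of κ via the product measure
  have hκ1' : Integrable (fun p : ℝ × ℝ => p.1 - p.2) (μψ.prod μf) := by
    rw [hκeq, hκ'] at hκ1
    exact (integrable_map_measure aestronglyMeasurable_id hsubmeas.aemeasurable).mp hκ1
  have hκ2' : Integrable (fun p : ℝ × ℝ => (p.1 - p.2) ^ 2) (μψ.prod μf) := by
    rw [hκeq, hκ'] at hκ2
    exact (integrable_map_measure (measurable_id.pow_const 2).aestronglyMeasurable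
      hsubmeas.aemeasurable).mp hκ2
  have hid : AEStronglyMeasurable (fun x : ℝ => x)
      (Measure.map (fun p : ℝ × ℝ => p.1 - p.2) (μψ.prod μf)) :=
    aestronglyMeasurable_id
  have hsq : AEStronglyMeasurable (fun x : ℝ => x ^ 2)
      (Measure.map (fun p : ℝ × ℝ => p.1 - p.2) (μψ.prod μf)) :=
    (measurable_id.pow_const 2).aestronglyMeasurable
  have hmean : ∫ x, x ∂κ = ∫ x, x ∂μψ := by
    rw [hκeq, hκ', integral_map hsubmeas.aemeasurable hid]
    rw [MeasureTheory.integral_prod _ hκ1']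
    have : ∀ x : ℝ, (∫ t, (x - t) ∂μf) = x := by
      intro x
      rw [integral_sub (integrable_const x) hmf1, hint_t, integral_const]
      simp
    simp_rw [this]
  have hsecond : ∫ x, x ^ 2 ∂κ = (∫ x, x ^ 2 ∂μψ) + ∫ t, t ^ 2 * f t := by
    rw [hκeq, hκ', integral_map hsubmeas.aemeasurable hsq]
    rw [MeasureTheory.integral_prod _ hκ2']
    have hin : ∀ x : ℝ, (∫ t, (x - t) ^ 2 ∂μf) = x ^ 2 + ∫ t, t ^ 2 * f t := by
      intro x
      have hexp : ∀ t : ℝ, (x - t) ^ 2 = x ^ 2 - (2 * x) * t + t ^ 2 := by intro t; ring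
      simp_rw [hexp]
      have hsub : Integrable (fun t : ℝ => x ^ 2 - 2 * x * t) μf :=
        (integrable_const _).sub (hmf1.const_mul (2 * x))
      calc ∫ t, (x ^ 2 - 2 * x * t + t ^ 2) ∂μf
          = (∫ t, (x ^ 2 - 2 * x * t) ∂μf) + ∫ t, t ^ 2 ∂μf := integral_add hsub hmf2
        _ = ((∫ _t : ℝ, (x ^ 2 : ℝ) ∂μf) - ∫ t, 2 * x * t ∂μf) + ∫ t, t ^ 2 * f t := by
            rw [integral_sub (integrable_const _) (hmf1.const_mul (2 * x)), hint_t2]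
        _ = x ^ 2 + ∫ t, t ^ 2 * f t := by
            rw [integral_const_mul, hint_t, integral_const]; simp
    simp_rw [hin]
    rw [integral_add hμ2 (integrable_const _), integral_const]
    simp
  refine ⟨hκprob, ?_, ?_⟩
  · rw [var_helper κ hκ1 hκ2, var_helper μψ hμ1 hμ2, hmean, hsecond]
    ring
  · rw [hsecond]; ring
end

section
/- Let H, K be complex Hilbert spaces, ξ ∈ K a unit vector, M a bounded selfadjoint operator on K, and U a unitary on H ⊗ K. Let E^M be the spectral measure of M and define the POVM E(X) on H by ⟨ψ, E(X)ψ⟩ = ⟨U(ψ⊗ξ), (I ⊗ E^M(X)) U(ψ⊗ξ)⟩. Then E is projection valued if and only if (I ⊗ P_ξ) commutes with U*(I ⊗ E^M(X))U for every Borel set X, where P_ξ is the orthogonal projection onto ℂξ. -/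
open ContinuousLinearMap
open scoped InnerProductSpace

/-!
Write `P = j j†` and `A = U† F(X) U`; both are orthogonal projections on `T`. Since `y ↦ j y j†` is
injective and multiplicative, `E(X) = j† A j` is idempotent exactly when `j E(X) j† = P A P` is. For projections `P` and `A`,
`P A P - (P A P)² = ((1 - P) A P)† ((1 - P) A P)`, so by the C*-identity `P A P` is idempotent iff
`(1 - P) A P = 0`, i.e. `A P = P A P`; taking adjoints gives `P A = P A P` as well, hence `P A = A P`.
-/

theorem IsStarProjection.star_mul_mul_of_mul_star_eq_one {R : Type*} [Semiring R] [StarRing R]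
    {p u : R} (hp : IsStarProjection p) (hu : u * star u = 1) :
    IsStarProjection (star u * p * u) where
  isIdempotentElem :=
    calc star u * p * u * (star u * p * u) = star u * (p * (u * star u) * p) * u := by
          simp only [mul_assoc]
      _ = star u * p * u := by rw [hu, mul_one, hp.isIdempotentElem.eq, mul_assoc]
  isSelfAdjoint := hp.isSelfAdjoint.conjugate' u

theorem IsStarProjection.commute_iff_one_sub_mul_mul_eq_zero {R : Type*} [Ring R] [StarRing R]
    {p a : R} (hp : IsStarProjection p) (ha : IsSelfAdjoint a) :
    Commute p a ↔ (1 - p) * a * p = 0 := by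
  constructor
  · intro h
    rw [mul_assoc, ← h.eq, ← mul_assoc, hp.one_sub_mul_self, zero_mul]
  · intro h
    have hap : a * p = p * a * p := by rwa [sub_mul, sub_mul, one_mul, sub_eq_zero] at h
    have hpa : p * a = p * a * p := by
      simpa [star_mul, hp.isSelfAdjoint.star_eq, ha.star_eq, mul_assoc] using congrArg star hap
    exact hpa.trans hap.symm

theorem IsStarProjection.mul_mul_self_sub_sq {R : Type*} [Ring R] [StarRing R] {p a : R}
    (hp : IsStarProjection p) (ha : IsStarProjection a) :
    p * a * p - p * a * p * (p * a * p) = star ((1 - p) * a * p) * ((1 - p) * a * p) :=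
  calc p * a * p - p * a * p * (p * a * p) = p * a * p - p * a * (p * p) * a * p := by
        noncomm_ring
    _ = p * (a * a) * p - p * a * p * a * p := by
        rw [hp.isIdempotentElem.eq, ha.isIdempotentElem.eq]
    _ = p * a * ((1 - p) * (1 - p)) * a * p := by
        rw [hp.one_sub.isIdempotentElem.eq]; noncomm_ring
    _ = star ((1 - p) * a * p) * ((1 - p) * a * p) := by
        rw [star_mul, star_mul, hp.isSelfAdjoint.star_eq, ha.isSelfAdjoint.star_eq,
          hp.one_sub.isSelfAdjoint.star_eq]
        noncomm_ring

theorem IsStarProjection.isIdempotentElem_mul_mul_self_iff_commute {R : Type*} [NormedRing R]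
    [StarRing R] [CStarRing R] {p a : R} (hp : IsStarProjection p) (ha : IsStarProjection a) :
    IsIdempotentElem (p * a * p) ↔ Commute p a := by
  rw [hp.commute_iff_one_sub_mul_mul_eq_zero ha.isSelfAdjoint,
    ← CStarRing.star_mul_self_eq_zero_iff, ← hp.mul_mul_self_sub_sq ha, sub_eq_zero,
    IsIdempotentElem, eq_comm]

namespace ContinuousLinearMap

variable {𝕜 E F : Type*} [RCLike 𝕜] [NormedAddCommGroup E] [InnerProductSpace 𝕜 E]
  [CompleteSpace E] [NormedAddCommGroup F] [InnerProductSpace 𝕜 F] [CompleteSpace F]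
  {j : E →L[𝕜] F}

theorem isStarProjection_comp_adjoint (hj : adjoint j ∘L j = 1) :
    IsStarProjection (j ∘L adjoint j) where
  isIdempotentElem := by
    rw [IsIdempotentElem, mul_def, comp_assoc, ← comp_assoc (adjoint j), hj, one_def, id_comp]
  isSelfAdjoint := by
    rw [IsSelfAdjoint, star_eq_adjoint, adjoint_comp, adjoint_adjoint]

theorem isIdempotentElem_comp_comp_adjoint_iff (hj : adjoint j ∘L j = 1) {y : E →L[𝕜] E} :
    IsIdempotentElem (j ∘L y ∘L adjoint j) ↔ IsIdempotentElem y := by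
  have hcancel : ∀ z : E →L[𝕜] E, adjoint j ∘L (j ∘L z ∘L adjoint j) ∘L j = z := by
    intro z
    simp only [comp_assoc, hj, one_def, comp_id]
    rw [← comp_assoc, hj, one_def, id_comp]
  have hmul : (j ∘L y ∘L adjoint j) * (j ∘L y ∘L adjoint j) = j ∘L (y * y) ∘L adjoint j := by
    simp only [mul_def, comp_assoc]
    rw [← comp_assoc (adjoint j) j, hj, one_def, id_comp]
  rw [IsIdempotentElem, IsIdempotentElem, hmul]
  exact ⟨fun h => by simpa only [hcancel] using congrArg (fun z => adjoint j ∘L z ∘L j) h,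
    fun h => by rw [h]⟩

end ContinuousLinearMap

theorem measured_observable_projection_valued_iff_commute_general
    {H T : Type*} [NormedAddCommGroup H] [InnerProductSpace ℂ H] [CompleteSpace H]
    [NormedAddCommGroup T] [InnerProductSpace ℂ T] [CompleteSpace T]
    (j : H →L[ℂ] T) (hj : (adjoint j).comp j = 1)
    (U : T →L[ℂ] T) (hU2 : U * adjoint U = 1)
    (F : Set ℝ → (T →L[ℂ] T))
    (hFsa : ∀ X : Set ℝ, MeasurableSet X → IsSelfAdjoint (F X))
    (hFidem : ∀ X : Set ℝ, MeasurableSet X → IsIdempotentElem (F X))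
    (E : Set ℝ → (H →L[ℂ] H))
    (hE : ∀ X : Set ℝ, MeasurableSet X →
      E X = (adjoint j).comp (((adjoint U * F X * U)).comp j)) :
    (∀ X : Set ℝ, MeasurableSet X → IsIdempotentElem (E X))
      ↔ (∀ X : Set ℝ, MeasurableSet X →
          Commute (j.comp (adjoint j)) (adjoint U * F X * U)) := by
  refine forall₂_congr fun X hX => ?_
  have hA : IsStarProjection (adjoint U * F X * U) := by
    simpa only [star_eq_adjoint] using
      IsStarProjection.star_mul_mul_of_mul_star_eq_one ⟨hFidem X hX, hFsa X hX⟩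
        (by rwa [star_eq_adjoint])
  rw [hE X hX, ← isIdempotentElem_comp_comp_adjoint_iff hj,
    ← (isStarProjection_comp_adjoint hj).isIdempotentElem_mul_mul_self_iff_commute hA]
  simp only [mul_def, comp_assoc]

/-- A measurement scheme `⟨K, ξ, M, U⟩` is modelled abstractly: `T` plays the
role of `H ⊗ K`, the isometry `j : H → T` is `ψ ↦ ψ ⊗ ξ` (so `j* j = I` and
`P_ξ := j j*` is the projection `I ⊗ |ξ⟩⟨ξ|`), `U` is the unitary coupling on `T`, and
`F X` is the spectral projection `I ⊗ E^M(X)` of the pointer observable. The measured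
POVM is `E X := j* U* (F X) U j`, which satisfies the probability reproducibility
condition `⟨ψ, E(X) ψ⟩ = ⟨U(ψ⊗ξ), (I ⊗ E^M(X)) U(ψ⊗ξ)⟩`. Then `E` is projection valued
if and only if `I ⊗ P[ξ]` commutes with `U*(I ⊗ E^M(X))U` for every Borel set `X`. -/
theorem measured_observable_projection_valued_iff_commute
    {H T : Type*} [NormedAddCommGroup H] [InnerProductSpace ℂ H] [CompleteSpace H]
    [NormedAddCommGroup T] [InnerProductSpace ℂ T] [CompleteSpace T]
    (j : H →L[ℂ] T) (hj : (adjoint j).comp j = 1)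
    (U : T →L[ℂ] T) (hU1 : adjoint U * U = 1) (hU2 : U * adjoint U = 1)
    (F : Set ℝ → (T →L[ℂ] T))
    (hFsa : ∀ X : Set ℝ, MeasurableSet X → IsSelfAdjoint (F X))
    (hFidem : ∀ X : Set ℝ, MeasurableSet X → IsIdempotentElem (F X))
    (hFnorm : F Set.univ = 1)
    (E : Set ℝ → (H →L[ℂ] H))
    (hE : ∀ X : Set ℝ, MeasurableSet X →
      E X = (adjoint j).comp (((adjoint U * F X * U)).comp j)) :
    (∀ X : Set ℝ, MeasurableSet X → IsIdempotentElem (E X))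
      ↔ (∀ X : Set ℝ, MeasurableSet X →
          Commute (j.comp (adjoint j)) (adjoint U * F X * U)) :=
  measured_observable_projection_valued_iff_commute_general j hj U hU2 F hFsa hFidem E hE
end
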